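/- For n ≥ 1 and 0 < q < n, there exists a constant A > 0 such that for all x ∈ ℝⁿ, |lim_{ε→0} ∫_{|y|≥ε} (⟨x⟩^{-q} − ⟨x+y⟩^{-q}) / |y|^{n+1} dy| ≤ A ⟨x⟩^{-q-1}. -/

import Mathlib

/-!
Write `⟨x⟩ = √(1 + ‖x‖²)`. The truncation domains `{ε ≤ ‖y‖}` are symmetric, so the
truncated integrals do not change when the kernel is replaced by its symmetrisation
`(2⟨x⟩^{-q} - ⟨x+y⟩^{-q} - ⟨x-y⟩^{-q}) / (2‖y‖^{n+1})`, and every limit `L` is bounded by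
the `L¹` norm of the symmetrised kernel. Split at `‖y‖ = ⟨x⟩/2`. Near the origin the second
difference is `O(⟨x⟩^{-q-2} ‖y‖²)` (mean value theorem twice along the segment
`x + [-1, 1] y`, on which `⟨·⟩ ≥ ⟨x⟩/2`), and `∫_{‖y‖ ≤ ⟨x⟩/2} ‖y‖^{1-n} ≍ ⟨x⟩`. Far from
the origin the three terms are estimated separately: `⟨x+y⟩^{-q} ≤ 2^q ‖y‖^{-q}` unless
`x + y` lies in the ball of radius `⟨x⟩`, whose contribution is
`⟨x⟩^{-n-1} ∫_{‖z‖ < ⟨x⟩} ‖z‖^{-q} ≍ ⟨x⟩^{-q-1}`; this is where `q < n` is needed. Every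
radial integral is reduced by scaling to the unit ball or its complement.
-/

open MeasureTheory Metric Set Module Filter
open scoped Pointwise ENNReal Topology

section RadialIntegrals

variable {E : Type*} [NormedAddCommGroup E] [NormedSpace ℝ E] [FiniteDimensional ℝ E]
  [MeasurableSpace E] [BorelSpace E] (μ : Measure E) [μ.IsAddHaarMeasure]

theorem setLIntegral_smul_set_norm_rpow (s : Set E) {R : ℝ} (hR : 0 < R) (r : ℝ) :
    ∫⁻ y in R • s, ENNReal.ofReal (‖y‖ ^ r) ∂μ =
      ENNReal.ofReal (R ^ (finrank ℝ E + r)) *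
        ∫⁻ y in s, ENNReal.ofReal (‖y‖ ^ r) ∂μ := by
  let e : E ≃ᵐ E := (Homeomorph.smulOfNeZero R hR.ne').toMeasurableEquiv
  have hμ : μ = ENNReal.ofReal (R ^ finrank ℝ E) • μ.map e := by
    rw [show ⇑e = (R • ·) from rfl, μ.map_addHaar_smul hR.ne', smul_smul,
      ← ENNReal.ofReal_mul (by positivity), abs_of_pos (by positivity),
      mul_inv_cancel₀ (by positivity), ENNReal.ofReal_one, one_smul]
  have hpre : e ⁻¹' (R • s) = s := by
    ext z; simp [e, Set.smul_mem_smul_set_iff₀ hR.ne']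
  have hscale (z : E) :
      ENNReal.ofReal (‖e z‖ ^ r) = ENNReal.ofReal (R ^ r) * ENNReal.ofReal (‖z‖ ^ r) := by
    rw [show e z = R • z from rfl, norm_smul, Real.norm_of_nonneg hR.le,
      Real.mul_rpow hR.le (norm_nonneg z), ENNReal.ofReal_mul (by positivity)]
  conv_lhs => rw [hμ]
  rw [Measure.restrict_smul, lintegral_smul_measure, e.restrict_map, lintegral_map_equiv, hpre]
  simp_rw [hscale]
  rw [lintegral_const_mul' _ _ ENNReal.ofReal_ne_top, smul_eq_mul, ← mul_assoc,
    ← ENNReal.ofReal_mul (by positivity), Real.rpow_add hR, Real.rpow_natCast]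

theorem setLIntegral_ball_norm_rpow {R : ℝ} (hR : 0 < R) (r : ℝ) :
    ∫⁻ y in ball (0 : E) R, ENNReal.ofReal (‖y‖ ^ r) ∂μ =
      ENNReal.ofReal (R ^ (finrank ℝ E + r)) *
        ∫⁻ y in ball (0 : E) 1, ENNReal.ofReal (‖y‖ ^ r) ∂μ := by
  rw [← smul_unitBall_of_pos hR, setLIntegral_smul_set_norm_rpow μ _ hR]

theorem setLIntegral_compl_ball_norm_rpow {R : ℝ} (hR : 0 < R) (r : ℝ) :
    ∫⁻ y in (ball (0 : E) R)ᶜ, ENNReal.ofReal (‖y‖ ^ r) ∂μ =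
      ENNReal.ofReal (R ^ (finrank ℝ E + r)) *
        ∫⁻ y in (ball (0 : E) 1)ᶜ, ENNReal.ofReal (‖y‖ ^ r) ∂μ := by
  have : (ball (0 : E) R)ᶜ = R • (ball (0 : E) 1)ᶜ := by
    rw [← smul_unitBall_of_pos hR]
    exact (Set.smul_set_compl (a := Units.mk0 R hR.ne')).symm
  rw [this, setLIntegral_smul_set_norm_rpow μ _ hR]

theorem setLIntegral_unitBall_norm_rpow_lt_top {r : ℝ} (hr : -(finrank ℝ E : ℝ) < r) :
    ∫⁻ y in ball (0 : E) 1, ENNReal.ofReal (‖y‖ ^ r) ∂μ < ∞ := by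
  rcases (finrank ℝ E).eq_zero_or_pos with hd | hd
  · have : Subsingleton E := finrank_zero_iff.1 hd
    rw [hd, CharP.cast_eq_zero, neg_zero] at hr
    simp [Subsingleton.elim _ (0 : E), Real.zero_rpow hr.ne']
  · refine IntegrableOn.setLIntegral_lt_top
      (integrableOn_ball_of_norm_le_rpow hd (C := 1) (α := -r) (by linarith) ?_
      (continuous_norm.measurable.pow_const r).aestronglyMeasurable)
    refine ae_of_all _ fun y => ?_
    rw [neg_neg, one_mul, Real.norm_of_nonneg (by positivity)]

theorem setLIntegral_compl_unitBall_norm_rpow_lt_top {r : ℝ} (hr : r < -(finrank ℝ E : ℝ)) :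
    ∫⁻ y in (ball (0 : E) 1)ᶜ, ENNReal.ofReal (‖y‖ ^ r) ∂μ < ∞ := by
  have hr0 : r < 0 := hr.trans_le (by simp)
  have hpt : ∀ y ∈ (ball (0 : E) 1)ᶜ, ENNReal.ofReal (‖y‖ ^ r) ≤
      ENNReal.ofReal (2 ^ (-r)) * ENNReal.ofReal ((1 + ‖y‖) ^ (-(-r))) := by
    intro y hy
    have hy1 : 1 ≤ ‖y‖ := by simpa using hy
    rw [← ENNReal.ofReal_mul (by positivity), neg_neg]
    refine ENNReal.ofReal_le_ofReal ?_
    calc ‖y‖ ^ r = 2 ^ (-r) * (2 * ‖y‖) ^ r := by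
          rw [Real.mul_rpow zero_le_two (norm_nonneg y), ← mul_assoc,
            ← Real.rpow_add zero_lt_two, neg_add_cancel, Real.rpow_zero, one_mul]
      _ ≤ 2 ^ (-r) * (1 + ‖y‖) ^ r := by
          gcongr 2 ^ (-r) * ?_
          exact Real.rpow_le_rpow_of_nonpos (by positivity) (by linarith) hr0.le
  calc ∫⁻ y in (ball (0 : E) 1)ᶜ, ENNReal.ofReal (‖y‖ ^ r) ∂μ
      ≤ ∫⁻ y in (ball (0 : E) 1)ᶜ,
          ENNReal.ofReal (2 ^ (-r)) * ENNReal.ofReal ((1 + ‖y‖) ^ (-(-r))) ∂μ :=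
        setLIntegral_mono' measurableSet_ball.compl hpt
    _ ≤ ∫⁻ y, ENNReal.ofReal (2 ^ (-r)) * ENNReal.ofReal ((1 + ‖y‖) ^ (-(-r))) ∂μ :=
        setLIntegral_le_lintegral _ _
    _ < ∞ := by
        rw [lintegral_const_mul' _ _ ENNReal.ofReal_ne_top]
        exact ENNReal.mul_lt_top ENNReal.ofReal_lt_top
          (finite_integral_one_add_norm (by linarith))

theorem integrableOn_compl_ball_norm_rpow {r : ℝ} (hr : r < -(finrank ℝ E : ℝ)) {R : ℝ}
    (hR : 0 < R) : IntegrableOn (fun y : E => ‖y‖ ^ r) (ball (0 : E) R)ᶜ μ := by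
  refine ⟨(continuous_norm.measurable.pow_const r).aestronglyMeasurable, ?_⟩
  rw [hasFiniteIntegral_iff_ofReal (ae_of_all _ fun y => by positivity),
    setLIntegral_compl_ball_norm_rpow μ hR]
  exact ENNReal.mul_lt_top ENNReal.ofReal_lt_top
    (setLIntegral_compl_unitBall_norm_rpow_lt_top μ hr)

end RadialIntegrals

section JapaneseBracket

variable {E : Type*} [NormedAddCommGroup E]

noncomputable def japaneseBracket (x : E) : ℝ := √(1 + ‖x‖ ^ 2)

theorem one_le_japaneseBracket (x : E) : 1 ≤ japaneseBracket x :=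
  Real.one_le_sqrt.2 (le_add_of_nonneg_right (sq_nonneg _))

theorem japaneseBracket_pos (x : E) : 0 < japaneseBracket x :=
  zero_lt_one.trans_le (one_le_japaneseBracket x)

theorem norm_le_japaneseBracket (x : E) : ‖x‖ ≤ japaneseBracket x :=
  Real.le_sqrt_of_sq_le (le_add_of_nonneg_left zero_le_one)

theorem one_add_norm_sq_rpow_div_two (x : E) (a : ℝ) :
    (1 + ‖x‖ ^ 2) ^ (a / 2) = japaneseBracket x ^ a := by
  rw [japaneseBracket, Real.sqrt_eq_rpow, ← Real.rpow_mul (by positivity)]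
  ring_nf

theorem japaneseBracket_le_add_norm_sub (x z : E) :
    japaneseBracket x ≤ japaneseBracket z + ‖x - z‖ := by
  have hx : ‖x‖ ≤ ‖z‖ + ‖x - z‖ := norm_le_norm_add_norm_sub' x z
  have hz := norm_le_japaneseBracket z
  have hz2 : japaneseBracket z ^ 2 = 1 + ‖z‖ ^ 2 := Real.sq_sqrt (by positivity)
  rw [japaneseBracket, Real.sqrt_le_iff]
  refine ⟨add_nonneg (japaneseBracket_pos z).le (norm_nonneg _), ?_⟩
  nlinarith [norm_nonneg z, norm_nonneg (x - z), norm_nonneg x]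

theorem japaneseBracket_div_two_le_japaneseBracket_add {x w : E}
    (hw : ‖w‖ ≤ japaneseBracket x / 2) :
    japaneseBracket x / 2 ≤ japaneseBracket (x + w) := by
  have := japaneseBracket_le_add_norm_sub x (x + w)
  rw [sub_add_cancel_left, norm_neg] at this
  linarith

theorem continuous_japaneseBracket : Continuous (japaneseBracket : E → ℝ) := by
  unfold japaneseBracket
  fun_prop

theorem japaneseBracket_rpow_neg_le_one {q : ℝ} (hq : 0 ≤ q) (z : E) :
    japaneseBracket z ^ (-q) ≤ 1 :=
  Real.rpow_le_one_of_one_le_of_nonpos (one_le_japaneseBracket z) (neg_nonpos.2 hq)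

theorem japaneseBracket_rpow_neg_le_norm_rpow {q : ℝ} (hq : 0 ≤ q) {z : E} (hz : z ≠ 0) :
    japaneseBracket z ^ (-q) ≤ ‖z‖ ^ (-q) :=
  Real.rpow_le_rpow_of_nonpos (norm_pos_iff.2 hz) (norm_le_japaneseBracket z) (neg_nonpos.2 hq)

theorem japaneseBracket_add_rpow_neg_mul_le {q p : ℝ} (hq : 0 ≤ q) (hp : 0 ≤ p) {x y : E}
    (hy : japaneseBracket x / 2 ≤ ‖y‖) :
    japaneseBracket (x + y) ^ (-q) * ‖y‖ ^ (-p) ≤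
      2 ^ q * ‖y‖ ^ (-q - p) +
        (japaneseBracket x / 2) ^ (-p) * (ball (0 : E) (japaneseBracket x)).indicator
          (fun z => japaneseBracket z ^ (-q)) (x + y) := by
  have hx := japaneseBracket_pos x
  have hy0 : 0 < ‖y‖ := by linarith
  have hpos : 0 ≤ (japaneseBracket x / 2) ^ (-p) *
      (ball (0 : E) (japaneseBracket x)).indicator (fun z => japaneseBracket z ^ (-q)) (x + y) :=
    mul_nonneg (by positivity)
      (indicator_nonneg (fun z _ => (Real.rpow_pos_of_pos (japaneseBracket_pos z) _).le) _)
  rcases le_or_gt (‖y‖ / 2) ‖x + y‖ with hfar | hnear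
  · have hxy : x + y ≠ 0 := norm_pos_iff.1 (by linarith)
    calc japaneseBracket (x + y) ^ (-q) * ‖y‖ ^ (-p)
        ≤ (‖y‖ / 2) ^ (-q) * ‖y‖ ^ (-p) := by
          refine mul_le_mul_of_nonneg_right ?_ (by positivity)
          exact (japaneseBracket_rpow_neg_le_norm_rpow hq hxy).trans
            (Real.rpow_le_rpow_of_nonpos (by positivity) hfar (neg_nonpos.2 hq))
      _ = 2 ^ q * ‖y‖ ^ (-q - p) := by
          rw [Real.div_rpow hy0.le zero_le_two, Real.rpow_neg zero_le_two, sub_eq_add_neg,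
            Real.rpow_add hy0]
          field_simp
      _ ≤ _ := le_add_of_nonneg_right hpos
  · -- `‖y‖ ≤ ‖x‖ + ‖x + y‖ < ⟨x⟩ + ‖y‖ / 2`, hence `‖x + y‖ < ‖y‖ / 2 < ⟨x⟩`
    have hball : x + y ∈ ball (0 : E) (japaneseBracket x) := by
      have := norm_le_norm_add_norm_sub' y (x + y)
      rw [sub_add_cancel_right, norm_neg] at this
      rw [mem_ball_zero_iff]
      linarith [norm_le_japaneseBracket x]
    rw [indicator_of_mem hball]
    calc japaneseBracket (x + y) ^ (-q) * ‖y‖ ^ (-p)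
        ≤ japaneseBracket (x + y) ^ (-q) * (japaneseBracket x / 2) ^ (-p) := by
          refine mul_le_mul_of_nonneg_left ?_ (Real.rpow_pos_of_pos (japaneseBracket_pos _) _).le
          exact Real.rpow_le_rpow_of_nonpos (by positivity) hy (neg_nonpos.2 hp)
      _ ≤ _ := by
          rw [mul_comm]
          exact le_add_of_nonneg_left (by positivity)

end JapaneseBracket

theorem abs_add_sub_two_mul_le_of_hasDerivAt {g g' g'' : ℝ → ℝ} {M : ℝ}
    (hg : ∀ t ∈ Icc (-1 : ℝ) 1, HasDerivAt g (g' t) t)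
    (hg' : ∀ t ∈ Icc (-1 : ℝ) 1, HasDerivAt g' (g'' t) t)
    (hM : ∀ t ∈ Icc (-1 : ℝ) 1, |g'' t| ≤ M) :
    |g 1 + g (-1) - 2 * g 0| ≤ 2 * M := by
  have hsym {t : ℝ} (ht : t ∈ Icc (0 : ℝ) 1) :
      t ∈ Icc (-1 : ℝ) 1 ∧ -t ∈ Icc (-1 : ℝ) 1 :=
    ⟨⟨by linarith [ht.1], ht.2⟩, ⟨by linarith [ht.2], by linarith [ht.1]⟩⟩
  have hslope : ∀ t ∈ Icc (0 : ℝ) 1, ‖g' t - g' (-t)‖ ≤ 2 * M := by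
    intro t ht
    have hM0 : 0 ≤ M := (abs_nonneg _).trans (hM 0 ⟨by norm_num, by norm_num⟩)
    have hdist : ‖t - -t‖ ≤ 2 := by
      rw [Real.norm_eq_abs, abs_le]; constructor <;> linarith [ht.1, ht.2]
    calc ‖g' t - g' (-t)‖ ≤ M * ‖t - -t‖ :=
          Convex.norm_image_sub_le_of_norm_hasDerivWithin_le
            (fun u hu => (hg' u hu).hasDerivWithinAt) (by simpa only [Real.norm_eq_abs] using hM)
            (convex_Icc (-1) 1) (hsym ht).2 (hsym ht).1
      _ ≤ 2 * M := by nlinarith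
  have hderiv : ∀ t ∈ Icc (0 : ℝ) 1,
      HasDerivWithinAt (fun t => g t + g (-t)) (g' t - g' (-t)) (Icc 0 1) t := by
    intro t ht
    have hneg : HasDerivAt (fun t => g (-t)) (g' (-t) * -1) t :=
      (hg (-t) (hsym ht).2).comp t (hasDerivAt_neg t)
    rw [sub_eq_add_neg, ← mul_neg_one]
    exact ((hg t (hsym ht).1).add hneg).hasDerivWithinAt
  have := Convex.norm_image_sub_le_of_norm_hasDerivWithin_le hderiv hslope (convex_Icc 0 1)
    (left_mem_Icc.2 zero_le_one) (right_mem_Icc.2 zero_le_one)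
  simpa [Real.norm_eq_abs, two_mul, ← sub_sub] using this

section SecondDifference

variable {E : Type*} [NormedAddCommGroup E] [InnerProductSpace ℝ E]

theorem hasDerivAt_one_add_norm_sq_rpow (x y : E) (p t : ℝ) :
    HasDerivAt (fun t : ℝ => (1 + ‖x + t • y‖ ^ 2) ^ p)
      (2 * p * (1 + ‖x + t • y‖ ^ 2) ^ (p - 1) * inner ℝ (x + t • y) y) t := by
  have hline : HasDerivAt (fun t : ℝ => x + t • y) y t := by
    simpa using ((hasDerivAt_id t).smul_const y).const_add x
  have := (hline.norm_sq.const_add 1).rpow_const (p := p) (Or.inl (by positivity))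
  convert this using 1
  ring

theorem hasDerivAt_inner_add_smul (x y : E) (t : ℝ) :
    HasDerivAt (fun t : ℝ => inner ℝ (x + t • y) y) (‖y‖ ^ 2) t := by
  have h : (fun t : ℝ => inner ℝ (x + t • y) y) =
      fun t => inner ℝ x y + t * ‖y‖ ^ 2 := by
    ext t
    rw [inner_add_left, real_inner_smul_left, real_inner_self_eq_norm_sq]
  rw [h]
  simpa using ((hasDerivAt_id t).mul_const (‖y‖ ^ 2)).const_add (inner ℝ x y)

theorem exists_hasDerivAt_japaneseBracket_rpow_add_smul {q : ℝ} (hq : 0 ≤ q) (x y : E) :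
    ∃ g' g'' : ℝ → ℝ,
      (∀ t, HasDerivAt (fun t : ℝ => japaneseBracket (x + t • y) ^ (-q)) (g' t) t) ∧
      (∀ t, HasDerivAt g' (g'' t) t) ∧
      ∀ t, |g'' t| ≤ q * (q + 3) * japaneseBracket (x + t • y) ^ (-q - 2) * ‖y‖ ^ 2 := by
  set p : ℝ := -q / 2 with hp
  set P : ℝ → ℝ := fun t => 1 + ‖x + t • y‖ ^ 2
  set v : ℝ → ℝ := fun t => inner ℝ (x + t • y) y
  have hP (t : ℝ) : 0 < P t := by positivity
  have hPbracket (t a : ℝ) : P t ^ (a / 2) = japaneseBracket (x + t • y) ^ a :=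
    one_add_norm_sq_rpow_div_two _ _
  have hv (t : ℝ) : v t * v t ≤ P t * ‖y‖ ^ 2 := by
    have h := abs_real_inner_le_norm (x + t • y) y
    have h2 : v t ^ 2 ≤ (‖x + t • y‖ * ‖y‖) ^ 2 := by
      rw [← sq_abs]; exact pow_le_pow_left₀ (abs_nonneg _) h 2
    nlinarith [sq_nonneg ‖y‖]
  refine ⟨fun t => 2 * p * (P t ^ (p - 1) * v t),
    fun t => 2 * p * (2 * (p - 1) * P t ^ (p - 1 - 1) * v t * v t + P t ^ (p - 1) * ‖y‖ ^ 2),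
    fun t => ?_, fun t => ?_, fun t => ?_⟩
  · simp_rw [← hPbracket _ (-q)]
    exact (hasDerivAt_one_add_norm_sq_rpow x y p t).congr_deriv (by ring)
  · exact (((hasDerivAt_one_add_norm_sq_rpow x y (p - 1) t).mul
      (hasDerivAt_inner_add_smul x y t)).const_mul (2 * p)).congr_deriv (by ring)
  have hPpow : P t ^ (p - 1 - 1) * P t = P t ^ (p - 1) := by
    rw [← Real.rpow_add_one (hP t).ne']; ring_nf
  have hA : 0 ≤ P t ^ (p - 1 - 1) := (Real.rpow_pos_of_pos (hP t) _).le
  have hB : 0 ≤ P t ^ (p - 1) * ‖y‖ ^ 2 :=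
    mul_nonneg (Real.rpow_pos_of_pos (hP t) _).le (sq_nonneg _)
  have hvv : P t ^ (p - 1 - 1) * (v t * v t) ≤ P t ^ (p - 1) * ‖y‖ ^ 2 := by
    rw [← hPpow, mul_assoc]
    exact mul_le_mul_of_nonneg_left (hv t) hA
  have hvv0 : 0 ≤ P t ^ (p - 1 - 1) * (v t * v t) := mul_nonneg hA (mul_self_nonneg _)
  have hq2 : 0 ≤ q * (q + 2) := by positivity
  calc |2 * p * (2 * (p - 1) * P t ^ (p - 1 - 1) * v t * v t + P t ^ (p - 1) * ‖y‖ ^ 2)|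
      = |q * (q + 2) * (P t ^ (p - 1 - 1) * (v t * v t)) - q * (P t ^ (p - 1) * ‖y‖ ^ 2)| := by
        rw [hp]; ring_nf
    _ ≤ q * (q + 3) * (P t ^ (p - 1) * ‖y‖ ^ 2) := by
        rw [abs_le]
        constructor <;> nlinarith [mul_le_mul_of_nonneg_left hvv hq2, mul_nonneg hq2 hvv0,
          mul_nonneg hq hB]
    _ = q * (q + 3) * japaneseBracket (x + t • y) ^ (-q - 2) * ‖y‖ ^ 2 := by
        rw [show p - 1 = (-q - 2) / 2 by ring, hPbracket]
        ring

theorem abs_second_difference_japaneseBracket_rpow_le {q : ℝ} (hq : 0 ≤ q) {x y : E}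
    (hy : ‖y‖ ≤ japaneseBracket x / 2) :
    |japaneseBracket (x + y) ^ (-q) + japaneseBracket (x - y) ^ (-q) -
        2 * japaneseBracket x ^ (-q)| ≤
      2 * (q * (q + 3) * (japaneseBracket x / 2) ^ (-q - 2) * ‖y‖ ^ 2) := by
  obtain ⟨g', g'', hg, hg', hbound⟩ := exists_hasDerivAt_japaneseBracket_rpow_add_smul hq x y
  have hsegment : ∀ t ∈ Icc (-1 : ℝ) 1, |g'' t| ≤
      q * (q + 3) * (japaneseBracket x / 2) ^ (-q - 2) * ‖y‖ ^ 2 := by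
    intro t ht
    have hty : ‖t • y‖ ≤ japaneseBracket x / 2 := by
      rw [norm_smul, Real.norm_eq_abs]
      nlinarith [abs_le.2 ⟨ht.1, ht.2⟩, norm_nonneg y, abs_nonneg t]
    refine (hbound t).trans (mul_le_mul_of_nonneg_right
      (mul_le_mul_of_nonneg_left ?_ (by positivity)) (sq_nonneg _))
    exact Real.rpow_le_rpow_of_nonpos (by linarith [japaneseBracket_pos x])
      (japaneseBracket_div_two_le_japaneseBracket_add hty) (by linarith)
  simpa only [one_smul, neg_one_smul, ← sub_eq_add_neg, zero_smul, add_zero] using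
    abs_add_sub_two_mul_le_of_hasDerivAt (fun t _ => hg t) (fun t _ => hg' t) hsegment

end SecondDifference

theorem setIntegral_eq_setIntegral_add_comp_neg_div_two {G : Type*} [AddGroup G]
    [MeasurableSpace G] [MeasurableNeg G] {μ : Measure G} [μ.IsNegInvariant] {f : G → ℝ}
    {s : Set G} (hs : -s = s) (hf : IntegrableOn f s μ) :
    ∫ y in s, f y ∂μ = ∫ y in s, (f y + f (-y)) / 2 ∂μ := by
  have hmp := (Measure.measurePreserving_neg μ).restrict_preimage_emb
    (MeasurableEquiv.neg G).measurableEmbedding s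
  rw [show Neg.neg ⁻¹' s = s from hs] at hmp
  have hneg : ∫ y in s, f (-y) ∂μ = ∫ y in s, f y ∂μ :=
    hmp.integral_comp (MeasurableEquiv.neg G).measurableEmbedding f
  have hf' : IntegrableOn (fun y => f (-y)) s μ :=
    (hmp.integrable_comp_emb (MeasurableEquiv.neg G).measurableEmbedding).2 hf
  rw [integral_div, integral_add hf hf', hneg]
  ring

section HalfLaplacianKernel

variable {E : Type*} [NormedAddCommGroup E] [InnerProductSpace ℝ E]

noncomputable def halfLaplacianKernel (q : ℝ) (x y : E) : ℝ :=
  (japaneseBracket x ^ (-q) - japaneseBracket (x + y) ^ (-q)) / ‖y‖ ^ (finrank ℝ E + 1)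

theorem inv_norm_pow_finrank_add_one (y : E) :
    (‖y‖ ^ (finrank ℝ E + 1))⁻¹ = ‖y‖ ^ (-((finrank ℝ E : ℝ) + 1)) := by
  rw [Real.rpow_neg (norm_nonneg y), ← Nat.cast_succ, Real.rpow_natCast]

theorem abs_halfLaplacianKernel_le {q : ℝ} (hq : 0 ≤ q) (x y : E) :
    |halfLaplacianKernel q x y| ≤ 2 * ‖y‖ ^ (-((finrank ℝ E : ℝ) + 1)) := by
  have h1 := japaneseBracket_rpow_neg_le_one hq x
  have h2 := japaneseBracket_rpow_neg_le_one hq (x + y)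
  have h3 := Real.rpow_pos_of_pos (japaneseBracket_pos x) (-q)
  have h4 := Real.rpow_pos_of_pos (japaneseBracket_pos (x + y)) (-q)
  rw [halfLaplacianKernel, div_eq_mul_inv, inv_norm_pow_finrank_add_one, abs_mul,
    abs_of_nonneg (Real.rpow_nonneg (norm_nonneg y) _)]
  exact mul_le_mul_of_nonneg_right (by rw [abs_le]; constructor <;> linarith)
    (Real.rpow_nonneg (norm_nonneg y) _)

theorem halfLaplacianKernel_add_neg (q : ℝ) (x y : E) :
    halfLaplacianKernel q x y + halfLaplacianKernel q x (-y) =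
      (2 * japaneseBracket x ^ (-q) - japaneseBracket (x + y) ^ (-q) -
        japaneseBracket (x - y) ^ (-q)) * ‖y‖ ^ (-((finrank ℝ E : ℝ) + 1)) := by
  rw [halfLaplacianKernel, halfLaplacianKernel, norm_neg, ← sub_eq_add_neg, ← add_div,
    div_eq_mul_inv, inv_norm_pow_finrank_add_one]
  ring

noncomputable def halfLaplacianKernelSymm (q : ℝ) (x y : E) : ℝ :=
  (halfLaplacianKernel q x y + halfLaplacianKernel q x (-y)) / 2

theorem abs_halfLaplacianKernelSymm_le_of_norm_le {q : ℝ} (hq : 0 ≤ q) {x y : E}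
    (hy : ‖y‖ ≤ japaneseBracket x / 2) :
    |halfLaplacianKernelSymm q x y| ≤
      q * (q + 3) * (japaneseBracket x / 2) ^ (-q - 2) * ‖y‖ ^ (1 - (finrank ℝ E : ℝ)) := by
  have hc : 0 ≤ q * (q + 3) * (japaneseBracket x / 2) ^ (-q - 2) :=
    mul_nonneg (by positivity) (Real.rpow_nonneg (by linarith [japaneseBracket_pos x]) _)
  rw [halfLaplacianKernelSymm, halfLaplacianKernel_add_neg]
  rcases eq_or_ne y 0 with rfl | hy0
  · rw [norm_zero, Real.zero_rpow (neg_ne_zero.2 (by positivity)), mul_zero, zero_div, abs_zero]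
    exact mul_nonneg hc (Real.rpow_nonneg le_rfl _)
  have hy0' := norm_pos_iff.2 hy0
  have hpow : ‖y‖ ^ 2 * ‖y‖ ^ (-((finrank ℝ E : ℝ) + 1)) =
      ‖y‖ ^ (1 - (finrank ℝ E : ℝ)) := by
    rw [← Real.rpow_natCast, ← Real.rpow_add hy0']; ring_nf
  have hdiff := abs_second_difference_japaneseBracket_rpow_le hq hy
  rw [abs_div, abs_mul, abs_two, abs_of_pos (Real.rpow_pos_of_pos hy0' _),
    show 2 * japaneseBracket x ^ (-q) - japaneseBracket (x + y) ^ (-q) -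
      japaneseBracket (x - y) ^ (-q) = -(japaneseBracket (x + y) ^ (-q) +
      japaneseBracket (x - y) ^ (-q) - 2 * japaneseBracket x ^ (-q)) by ring, abs_neg, ← hpow]
  have := mul_le_mul_of_nonneg_right hdiff
    (Real.rpow_pos_of_pos hy0' (-((finrank ℝ E : ℝ) + 1))).le
  linarith

theorem abs_halfLaplacianKernelSymm_le (q : ℝ) (x y : E) :
    |halfLaplacianKernelSymm q x y| ≤
      (japaneseBracket x ^ (-q) + japaneseBracket (x + y) ^ (-q) +
        japaneseBracket (x - y) ^ (-q)) * ‖y‖ ^ (-((finrank ℝ E : ℝ) + 1)) := by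
  have h1 := Real.rpow_pos_of_pos (japaneseBracket_pos x) (-q)
  have h2 := Real.rpow_pos_of_pos (japaneseBracket_pos (x + y)) (-q)
  have h3 := Real.rpow_pos_of_pos (japaneseBracket_pos (x - y)) (-q)
  have hρ := Real.rpow_nonneg (norm_nonneg y) (-((finrank ℝ E : ℝ) + 1))
  rw [halfLaplacianKernelSymm, halfLaplacianKernel_add_neg, abs_div, abs_mul, abs_two,
    abs_of_nonneg hρ]
  have : |2 * japaneseBracket x ^ (-q) - japaneseBracket (x + y) ^ (-q) -
      japaneseBracket (x - y) ^ (-q)| ≤ 2 * (japaneseBracket x ^ (-q) +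
        japaneseBracket (x + y) ^ (-q) + japaneseBracket (x - y) ^ (-q)) := by
    rw [abs_le]; constructor <;> linarith
  have := mul_le_mul_of_nonneg_right this hρ
  linarith

theorem ofReal_abs_halfLaplacianKernelSymm_le_of_le_norm {q : ℝ} (hq : 0 ≤ q) {x y : E}
    (hy : japaneseBracket x / 2 ≤ ‖y‖) :
    ENNReal.ofReal |halfLaplacianKernelSymm q x y| ≤
      (ENNReal.ofReal ((japaneseBracket x / 2) ^ (-q)) *
          ENNReal.ofReal (‖y‖ ^ (-((finrank ℝ E : ℝ) + 1))) +
        ENNReal.ofReal (2 * 2 ^ q) *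
          ENNReal.ofReal (‖y‖ ^ (-q - ((finrank ℝ E : ℝ) + 1)))) +
      ENNReal.ofReal ((japaneseBracket x / 2) ^ (-((finrank ℝ E : ℝ) + 1))) *
        (ENNReal.ofReal ((ball (0 : E) (japaneseBracket x)).indicator
            (fun z => japaneseBracket z ^ (-q)) (x + y)) +
          ENNReal.ofReal ((ball (0 : E) (japaneseBracket x)).indicator
            (fun z => japaneseBracket z ^ (-q)) (x - y))) := by
  set d : ℝ := (finrank ℝ E : ℝ)
  set I : E → ℝ :=
    (ball (0 : E) (japaneseBracket x)).indicator (fun z => japaneseBracket z ^ (-q))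
  have hx := japaneseBracket_pos x
  have hI (z : E) : 0 ≤ I z :=
    indicator_nonneg (fun z _ => (Real.rpow_pos_of_pos (japaneseBracket_pos z) _).le) z
  have hplus := japaneseBracket_add_rpow_neg_mul_le hq (by positivity : 0 ≤ d + 1) hy
  have hminus := japaneseBracket_add_rpow_neg_mul_le hq (by positivity : 0 ≤ d + 1) (y := -y)
    (by rwa [norm_neg])
  rw [norm_neg, ← sub_eq_add_neg] at hminus
  have hxq : japaneseBracket x ^ (-q) ≤ (japaneseBracket x / 2) ^ (-q) :=
    Real.rpow_le_rpow_of_nonpos (by positivity) (by linarith) (neg_nonpos.2 hq)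
  have hρ := Real.rpow_nonneg (norm_nonneg y) (-(d + 1))
  have hreal : |halfLaplacianKernelSymm q x y| ≤
      (japaneseBracket x / 2) ^ (-q) * ‖y‖ ^ (-(d + 1)) + 2 * 2 ^ q * ‖y‖ ^ (-q - (d + 1)) +
        (japaneseBracket x / 2) ^ (-(d + 1)) * (I (x + y) + I (x - y)) := by
    have := mul_le_mul_of_nonneg_right hxq hρ
    have := abs_halfLaplacianKernelSymm_le q x y
    nlinarith
  have h₁ : 0 ≤ (japaneseBracket x / 2) ^ (-q) * ‖y‖ ^ (-(d + 1)) := by positivity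
  have h₂ : 0 ≤ 2 * 2 ^ q * ‖y‖ ^ (-q - (d + 1)) := by positivity
  have h₃ : 0 ≤ (japaneseBracket x / 2) ^ (-(d + 1)) * (I (x + y) + I (x - y)) :=
    mul_nonneg (by positivity) (add_nonneg (hI _) (hI _))
  refine (ENNReal.ofReal_le_ofReal hreal).trans_eq ?_
  rw [ENNReal.ofReal_add (add_nonneg h₁ h₂) h₃, ENNReal.ofReal_add h₁ h₂,
    ENNReal.ofReal_mul (p := (japaneseBracket x / 2) ^ (-q)) (by positivity),
    ENNReal.ofReal_mul (p := 2 * 2 ^ q) (by positivity),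
    ENNReal.ofReal_mul (p := (japaneseBracket x / 2) ^ (-(d + 1))) (by positivity),
    ENNReal.ofReal_add (hI _) (hI _)]

variable [MeasurableSpace E] [BorelSpace E]

theorem measurable_halfLaplacianKernel (q : ℝ) (x : E) :
    Measurable (halfLaplacianKernel q x) := by
  unfold halfLaplacianKernel
  exact (measurable_const.sub ((continuous_japaneseBracket.measurable.comp
    (measurable_const_add x)).pow_const _)).div (measurable_norm.pow_const _)

variable [FiniteDimensional ℝ E] (μ : Measure E) [μ.IsAddHaarMeasure]

theorem integrableOn_compl_ball_halfLaplacianKernel {q : ℝ} (hq : 0 ≤ q) (x : E) {ε : ℝ}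
    (hε : 0 < ε) : IntegrableOn (halfLaplacianKernel q x) (ball (0 : E) ε)ᶜ μ :=
  ((integrableOn_compl_ball_norm_rpow μ (r := -((finrank ℝ E : ℝ) + 1)) (by linarith)
    hε).const_mul 2).mono' (measurable_halfLaplacianKernel q x).aestronglyMeasurable
    (ae_of_all _ fun y => by
      simpa only [Real.norm_eq_abs] using abs_halfLaplacianKernel_le hq x y)

theorem exists_setLIntegral_ball_halfLaplacianKernelSymm_le {q : ℝ} (hq : 0 ≤ q) :
    ∃ C : ℝ≥0∞, C ≠ ∞ ∧ ∀ x : E,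
      ∫⁻ y in ball (0 : E) (japaneseBracket x / 2),
          ENNReal.ofReal |halfLaplacianKernelSymm q x y| ∂μ ≤
        C * ENNReal.ofReal ((japaneseBracket x / 2) ^ (-(q + 1))) := by
  set K := ∫⁻ y in ball (0 : E) 1, ENNReal.ofReal (‖y‖ ^ (1 - (finrank ℝ E : ℝ))) ∂μ
  have hK : K ≠ ∞ := (setLIntegral_unitBall_norm_rpow_lt_top μ (by linarith)).ne
  refine ⟨ENNReal.ofReal (q * (q + 3)) * K, by finiteness, fun x => ?_⟩
  set u := japaneseBracket x / 2
  have hu : 0 < u := half_pos (japaneseBracket_pos x)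
  calc ∫⁻ y in ball (0 : E) u, ENNReal.ofReal |halfLaplacianKernelSymm q x y| ∂μ
      ≤ ∫⁻ y in ball (0 : E) u, ENNReal.ofReal (q * (q + 3) * u ^ (-q - 2)) *
          ENNReal.ofReal (‖y‖ ^ (1 - (finrank ℝ E : ℝ))) ∂μ := by
        refine setLIntegral_mono' measurableSet_ball fun y hy => ?_
        rw [← ENNReal.ofReal_mul (by positivity)]
        exact ENNReal.ofReal_le_ofReal
          (abs_halfLaplacianKernelSymm_le_of_norm_le hq (mem_ball_zero_iff.1 hy).le)
    _ = ENNReal.ofReal (q * (q + 3) * u ^ (-q - 2)) * (ENNReal.ofReal (u ^ (1 : ℝ)) * K) := by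
        rw [lintegral_const_mul' _ _ ENNReal.ofReal_ne_top, setLIntegral_ball_norm_rpow μ hu,
          add_sub_cancel]
    _ = ENNReal.ofReal (q * (q + 3)) * K * ENNReal.ofReal (u ^ (-(q + 1))) := by
        rw [← mul_assoc, ← ENNReal.ofReal_mul (by positivity), Real.rpow_one, mul_assoc,
          ← Real.rpow_add_one hu.ne', show -q - 2 + 1 = -(q + 1) by ring,
          ENNReal.ofReal_mul (by positivity)]
        ring

theorem lintegral_indicator_ball_japaneseBracket_rpow_add_sub_le {q : ℝ} (hq : 0 ≤ q)
    (hqd : q < finrank ℝ E) (x : E) {R : ℝ} (hR : 0 < R) :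
    ∫⁻ y, ENNReal.ofReal ((ball (0 : E) R).indicator (fun z => japaneseBracket z ^ (-q)) (x + y)) +
        ENNReal.ofReal ((ball (0 : E) R).indicator (fun z => japaneseBracket z ^ (-q)) (x - y)) ∂μ ≤
      2 * (ENNReal.ofReal (R ^ ((finrank ℝ E : ℝ) + -q)) *
        ∫⁻ z in ball (0 : E) 1, ENNReal.ofReal (‖z‖ ^ (-q)) ∂μ) := by
  have : Nontrivial E :=
    Module.nontrivial_of_finrank_pos (R := ℝ) (by exact_mod_cast hq.trans_lt hqd)
  set F : E → ℝ≥0∞ := fun z =>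
    ENNReal.ofReal ((ball (0 : E) R).indicator (fun z => japaneseBracket z ^ (-q)) z)
  have hF : Measurable F := ((continuous_japaneseBracket.measurable.pow_const _).indicator
    measurableSet_ball).ennreal_ofReal
  have hmass : ∫⁻ z, F z ∂μ ≤ ∫⁻ z in ball (0 : E) R, ENNReal.ofReal (‖z‖ ^ (-q)) ∂μ := by
    simp_rw [F, ← Function.comp_apply (f := ENNReal.ofReal),
      ← Set.indicator_comp_of_zero ENNReal.ofReal_zero]
    rw [lintegral_indicator measurableSet_ball]
    -- only almost everywhere, since `‖0‖ ^ (-q) = 0` in Lean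
    refine lintegral_mono_ae ((ae_restrict_of_ae (Measure.ae_ne μ 0)).mono fun z hz => ?_)
    exact ENNReal.ofReal_le_ofReal (japaneseBracket_rpow_neg_le_norm_rpow hq hz)
  change ∫⁻ y, F (x + y) + F (x - y) ∂μ ≤ _
  rw [lintegral_add_left (by fun_prop), lintegral_add_left_eq_self F x,
    lintegral_sub_left_eq_self F x, ← two_mul, ← setLIntegral_ball_norm_rpow μ hR]
  gcongr

theorem exists_setLIntegral_compl_ball_halfLaplacianKernelSymm_le {q : ℝ} (hq : 0 ≤ q)
    (hqd : q < finrank ℝ E) :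
    ∃ C : ℝ≥0∞, C ≠ ∞ ∧ ∀ x : E,
      ∫⁻ y in (ball (0 : E) (japaneseBracket x / 2))ᶜ,
          ENNReal.ofReal |halfLaplacianKernelSymm q x y| ∂μ ≤
        C * ENNReal.ofReal ((japaneseBracket x / 2) ^ (-(q + 1))) := by
  set d : ℝ := (finrank ℝ E : ℝ)
  set K₁ := ∫⁻ y in (ball (0 : E) 1)ᶜ, ENNReal.ofReal (‖y‖ ^ (-(d + 1))) ∂μ
  set K₂ := ∫⁻ y in (ball (0 : E) 1)ᶜ, ENNReal.ofReal (‖y‖ ^ (-q - (d + 1))) ∂μ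
  set K₃ := ∫⁻ y in ball (0 : E) 1, ENNReal.ofReal (‖y‖ ^ (-q)) ∂μ
  have hK₁ : K₁ ≠ ∞ := (setLIntegral_compl_unitBall_norm_rpow_lt_top μ (by linarith)).ne
  have hK₂ : K₂ ≠ ∞ := (setLIntegral_compl_unitBall_norm_rpow_lt_top μ (by linarith)).ne
  have hK₃ : K₃ ≠ ∞ := (setLIntegral_unitBall_norm_rpow_lt_top μ (by linarith)).ne
  refine ⟨K₁ + ENNReal.ofReal (2 * 2 ^ q) * K₂ + 2 * ENNReal.ofReal (2 ^ (d - q)) * K₃,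
    by finiteness, fun x => ?_⟩
  set u := japaneseBracket x / 2
  have hu : 0 < u := half_pos (japaneseBracket_pos x)
  have htail : ∫⁻ y in (ball (0 : E) u)ᶜ, ENNReal.ofReal (u ^ (-q)) *
        ENNReal.ofReal (‖y‖ ^ (-(d + 1))) + ENNReal.ofReal (2 * 2 ^ q) *
        ENNReal.ofReal (‖y‖ ^ (-q - (d + 1))) ∂μ =
      (K₁ + ENNReal.ofReal (2 * 2 ^ q) * K₂) * ENNReal.ofReal (u ^ (-(q + 1))) := by
    rw [lintegral_add_left (by fun_prop), lintegral_const_mul' _ _ ENNReal.ofReal_ne_top,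
      lintegral_const_mul' _ _ ENNReal.ofReal_ne_top, setLIntegral_compl_ball_norm_rpow μ hu,
      setLIntegral_compl_ball_norm_rpow μ hu, ← mul_assoc,
      ← ENNReal.ofReal_mul (by positivity),
      ← Real.rpow_add hu, show -q + (d + -(d + 1)) = -(q + 1) by ring,
      show d + (-q - (d + 1)) = -(q + 1) by ring]
    ring
  set I : E → ℝ :=
    (ball (0 : E) (japaneseBracket x)).indicator (fun z => japaneseBracket z ^ (-q))
  have hball : ∫⁻ y in (ball (0 : E) u)ᶜ, ENNReal.ofReal (u ^ (-(d + 1))) *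
        (ENNReal.ofReal (I (x + y)) + ENNReal.ofReal (I (x - y))) ∂μ ≤
      2 * ENNReal.ofReal (2 ^ (d - q)) * K₃ * ENNReal.ofReal (u ^ (-(q + 1))) := by
    have hscale : ENNReal.ofReal (u ^ (-(d + 1))) *
        ENNReal.ofReal (japaneseBracket x ^ (d + -q)) =
        ENNReal.ofReal (2 ^ (d - q)) * ENNReal.ofReal (u ^ (-(q + 1))) := by
      rw [← ENNReal.ofReal_mul (by positivity), ← ENNReal.ofReal_mul (by positivity),
        show japaneseBracket x = 2 * u by ring, Real.mul_rpow zero_le_two hu.le, mul_left_comm,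
        ← Real.rpow_add hu, show -(d + 1) + (d + -q) = -(q + 1) by ring,
        show d + -q = d - q by ring]
    calc _ ≤ ENNReal.ofReal (u ^ (-(d + 1))) *
          ∫⁻ y, ENNReal.ofReal (I (x + y)) + ENNReal.ofReal (I (x - y)) ∂μ :=
          (setLIntegral_le_lintegral _ _).trans_eq (lintegral_const_mul' _ _ ENNReal.ofReal_ne_top)
      _ ≤ ENNReal.ofReal (u ^ (-(d + 1))) *
            (2 * (ENNReal.ofReal (japaneseBracket x ^ (d + -q)) * K₃)) := by
          gcongr
          exact lintegral_indicator_ball_japaneseBracket_rpow_add_sub_le μ hq hqd x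
            (japaneseBracket_pos x)
      _ = 2 * K₃ * (ENNReal.ofReal (u ^ (-(d + 1))) *
            ENNReal.ofReal (japaneseBracket x ^ (d + -q))) := by ring
      _ = _ := by rw [hscale]; ring
  calc ∫⁻ y in (ball (0 : E) u)ᶜ, ENNReal.ofReal |halfLaplacianKernelSymm q x y| ∂μ
      ≤ ∫⁻ y in (ball (0 : E) u)ᶜ, (ENNReal.ofReal (u ^ (-q)) *
          ENNReal.ofReal (‖y‖ ^ (-(d + 1))) + ENNReal.ofReal (2 * 2 ^ q) *
          ENNReal.ofReal (‖y‖ ^ (-q - (d + 1)))) +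
          ENNReal.ofReal (u ^ (-(d + 1))) *
            (ENNReal.ofReal (I (x + y)) + ENNReal.ofReal (I (x - y))) ∂μ :=
        setLIntegral_mono' measurableSet_ball.compl fun y hy =>
          ofReal_abs_halfLaplacianKernelSymm_le_of_le_norm hq (by simpa using hy)
    _ ≤ _ := by
        rw [lintegral_add_left (by fun_prop), htail]
        exact (add_le_add le_rfl hball).trans_eq (by ring)

theorem exists_lintegral_halfLaplacianKernelSymm_le {q : ℝ} (hq : 0 ≤ q)
    (hqd : q < finrank ℝ E) :
    ∃ C : ℝ≥0∞, C ≠ ∞ ∧ ∀ x : E,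
      ∫⁻ y, ENNReal.ofReal |halfLaplacianKernelSymm q x y| ∂μ ≤
        C * ENNReal.ofReal ((japaneseBracket x / 2) ^ (-(q + 1))) := by
  obtain ⟨C₁, hC₁, h₁⟩ := exists_setLIntegral_ball_halfLaplacianKernelSymm_le μ hq
  obtain ⟨C₂, hC₂, h₂⟩ :=
    exists_setLIntegral_compl_ball_halfLaplacianKernelSymm_le μ hq hqd
  refine ⟨C₁ + C₂, ENNReal.add_ne_top.2 ⟨hC₁, hC₂⟩, fun x => ?_⟩
  rw [← lintegral_add_compl _ measurableSet_ball, add_mul]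
  exact add_le_add (h₁ x) (h₂ x)

theorem ofReal_abs_setIntegral_halfLaplacianKernel_le {q : ℝ} (hq : 0 ≤ q) (x : E) {ε : ℝ}
    (hε : 0 < ε) :
    ENNReal.ofReal |∫ y in (ball (0 : E) ε)ᶜ, halfLaplacianKernel q x y ∂μ| ≤
      ∫⁻ y, ENNReal.ofReal |halfLaplacianKernelSymm q x y| ∂μ := by
  rw [setIntegral_eq_setIntegral_add_comp_neg_div_two (by ext; simp)
    (integrableOn_compl_ball_halfLaplacianKernel μ hq x hε), ← Real.enorm_eq_ofReal_abs]
  refine (enorm_integral_le_lintegral_enorm _).trans ?_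
  simp only [Real.enorm_eq_ofReal_abs, halfLaplacianKernelSymm]
  exact setLIntegral_le_lintegral _ _

theorem exists_abs_le_of_tendsto_setIntegral_halfLaplacianKernel {q : ℝ} (hq : 0 ≤ q)
    (hqd : q < finrank ℝ E) :
    ∃ A > (0 : ℝ), ∀ (x : E) (L : ℝ),
      Tendsto (fun ε => ∫ y in (ball (0 : E) ε)ᶜ, halfLaplacianKernel q x y ∂μ)
          (𝓝[>] 0) (𝓝 L) →
        |L| ≤ A * japaneseBracket x ^ (-(q + 1)) := by
  obtain ⟨C, hC, hbound⟩ := exists_lintegral_halfLaplacianKernelSymm_le μ hq hqd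
  refine ⟨2 ^ (q + 1) * C.toReal + 1, by positivity, fun x L hL => ?_⟩
  have hx := japaneseBracket_pos x
  have hPV : ∀ ε > 0, |∫ y in (ball (0 : E) ε)ᶜ, halfLaplacianKernel q x y ∂μ| ≤
      C.toReal * (japaneseBracket x / 2) ^ (-(q + 1)) := fun ε hε => by
    have := (ofReal_abs_setIntegral_halfLaplacianKernel_le μ hq x hε).trans (hbound x)
    rwa [ENNReal.ofReal_le_iff_le_toReal (by finiteness), ENNReal.toReal_mul,
      ENNReal.toReal_ofReal (by positivity)] at this
  calc |L| ≤ C.toReal * (japaneseBracket x / 2) ^ (-(q + 1)) :=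
        le_of_tendsto hL.abs (eventually_nhdsWithin_of_forall hPV)
    _ = 2 ^ (q + 1) * C.toReal * japaneseBracket x ^ (-(q + 1)) := by
        rw [Real.div_rpow hx.le zero_le_two, Real.rpow_neg zero_le_two, div_inv_eq_mul]
        ring
    _ ≤ (2 ^ (q + 1) * C.toReal + 1) * japaneseBracket x ^ (-(q + 1)) := by
        gcongr
        linarith

end HalfLaplacianKernel

theorem halfLaplacian_weight_bound_subcritical_general (n : ℕ) (q : ℝ)
    (hq0 : 0 < q) (hq : q < (n : ℝ)) :
    ∃ A > (0:ℝ), ∀ (x : EuclideanSpace ℝ (Fin n)) (L : ℝ),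
      Tendsto
        (fun ε : ℝ => ∫ y in {y : EuclideanSpace ℝ (Fin n) | ε ≤ ‖y‖},
          ((1 + ‖x‖ ^ 2) ^ (-q / 2) - (1 + ‖x + y‖ ^ 2) ^ (-q / 2)) / ‖y‖ ^ (n + 1))
        (nhdsWithin 0 (Set.Ioi 0)) (nhds L) →
      |L| ≤ A * (1 + ‖x‖ ^ 2) ^ (-(q + 1) / 2) := by
  obtain ⟨A, hA, hbound⟩ := exists_abs_le_of_tendsto_setIntegral_halfLaplacianKernel
    (volume : Measure (EuclideanSpace ℝ (Fin n))) hq0.le (by simpa using hq)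
  refine ⟨A, hA, fun x L hL => ?_⟩
  rw [one_add_norm_sq_rpow_div_two]
  refine hbound x L (hL.congr fun ε => ?_)
  have hset : {y : EuclideanSpace ℝ (Fin n) | ε ≤ ‖y‖} = (ball 0 ε)ᶜ := by ext; simp
  simp only [hset, halfLaplacianKernel, one_add_norm_sq_rpow_div_two, finrank_euclideanSpace_fin]

/-- Pointwise bound for the half-Laplacian of the weight `⟨·⟩^{-q}`, case `0 < q < n`:
any principal-value limit `L` of the singular integral satisfies `|L| ≤ A ⟨x⟩^{-q-1}`. -/
theorem halfLaplacian_weight_bound_subcritical (n : ℕ) (hn : 1 ≤ n) (q : ℝ)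
    (hq0 : 0 < q) (hq : q < (n : ℝ)) :
    ∃ A > (0:ℝ), ∀ (x : EuclideanSpace ℝ (Fin n)) (L : ℝ),
      Tendsto
        (fun ε : ℝ => ∫ y in {y : EuclideanSpace ℝ (Fin n) | ε ≤ ‖y‖},
          ((1 + ‖x‖ ^ 2) ^ (-q / 2) - (1 + ‖x + y‖ ^ 2) ^ (-q / 2)) / ‖y‖ ^ (n + 1))
        (nhdsWithin 0 (Set.Ioi 0)) (nhds L) →
      |L| ≤ A * (1 + ‖x‖ ^ 2) ^ (-(q + 1) / 2) :=
  halfLaplacian_weight_bound_subcritical_general n q hq0 hq
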